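/- For every κ ≥ 1 and E ≥ 0, ψ_{E,κ}(1/2) ≤ (ψ_{E,κ}(η) + ψ_{E,κ}(1−η))/2 for all η ∈ [0,1], where ψ_{E,κ}(η) = g((κ−η)E + κ − 1) − g((1−η)E). -/

import Mathlib

noncomputable def g (x : ℝ) : ℝ := (x + 1) * Real.log (x + 1) - x * Real.log x

noncomputable def ψ (E κ η : ℝ) : ℝ := g ((κ - η) * E + κ - 1) - g ((1 - η) * E)

/-!
Put `c = (κ - 1)(E + 1) ≥ 0`. Then `ψ_{E,κ}(η) = φ((1 - η)E)` with `φ(u) = g(u + c) - g(u)`, and the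
points `(1 - η)E`, `ηE` have midpoint `E/2`, so the claim is midpoint convexity of `φ` on `[0, ∞)`.
Since `g'(x) = log (x + 1) - log x` and `(u + 1)(u + c) = u (u + c + 1) + c`, one finds
`φ'(u) = -log (1 + c / (u (u + c + 1)))`, which is monotone because `u (u + c + 1)` is.
-/

open Real Set

lemma continuous_g : Continuous g :=
  (continuous_mul_log.comp (continuous_add_const 1)).sub continuous_mul_log

lemma hasDerivAt_g {x : ℝ} (hx : 0 < x) : HasDerivAt g (log (x + 1) - log x) x := by
  have hshift : HasDerivAt (fun y => (y + 1) * log (y + 1)) (log (x + 1) + 1) x := by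
    simpa [Function.comp_def] using
      (hasDerivAt_mul_log (x := x + 1) (by positivity)).comp x ((hasDerivAt_id x).add_const 1)
  exact (hshift.sub (hasDerivAt_mul_log hx.ne')).congr_deriv (by ring)

lemma log_one_add_div_mul {c u : ℝ} (hc : 0 ≤ c) (hu : 0 < u) :
    log (1 + c / (u * (u + c + 1))) = log (u + 1) - log u + (log (u + c) - log (u + c + 1)) := by
  have hfactor : 1 + c / (u * (u + c + 1)) = (u + 1) * (u + c) / (u * (u + c + 1)) := by
    field_simp
    ring
  rw [hfactor, log_div (by positivity) (by positivity), log_mul (by positivity) (by positivity),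
    log_mul (by positivity) (by positivity)]
  ring

lemma hasDerivAt_g_add_sub_g {c u : ℝ} (hc : 0 ≤ c) (hu : 0 < u) :
    HasDerivAt (fun u => g (u + c) - g u) (-log (1 + c / (u * (u + c + 1)))) u := by
  have hshift : HasDerivAt (fun u => g (u + c)) (log (u + c + 1) - log (u + c)) u := by
    simpa [Function.comp_def] using
      (hasDerivAt_g (x := u + c) (by positivity)).comp u ((hasDerivAt_id u).add_const c)
  exact (hshift.sub (hasDerivAt_g hu)).congr_deriv (by rw [log_one_add_div_mul hc hu]; ring)

lemma convexOn_g_add_sub_g {c : ℝ} (hc : 0 ≤ c) :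
    ConvexOn ℝ (Ici 0) fun u => g (u + c) - g u := by
  refine MonotoneOn.convexOn_of_deriv (convex_Ici 0)
    ((continuous_g.comp (continuous_add_const c)).sub continuous_g).continuousOn ?_ ?_
  all_goals rw [interior_Ici]
  · exact fun u hu => (hasDerivAt_g_add_sub_g hc hu).differentiableAt.differentiableWithinAt
  · intro u (hu : 0 < u) v (hv : 0 < v) huv
    rw [(hasDerivAt_g_add_sub_g hc hu).deriv, (hasDerivAt_g_add_sub_g hc hv).deriv, neg_le_neg_iff]
    have hprod : u * (u + c + 1) ≤ v * (v + c + 1) :=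
      mul_le_mul huv (by linarith) (by positivity) hv.le
    exact log_le_log (by positivity)
      (add_le_add_right (div_le_div_of_nonneg_left hc (by positivity) hprod) 1)

lemma ψ_eq_g_add_sub_g (E κ η : ℝ) :
    ψ E κ η = g ((1 - η) * E + (κ - 1) * (E + 1)) - g ((1 - η) * E) := by
  unfold ψ
  ring_nf

/-- for `κ ≥ 1`, `E ≥ 0` and `η ∈ [0,1]`,
`ψ_{E,κ}(1/2) ≤ (ψ_{E,κ}(η) + ψ_{E,κ}(1−η))/2`. -/
theorem psi_half_min (E κ : ℝ) (hE : 0 ≤ E) (hκ : 1 ≤ κ)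
    (η : ℝ) (hη : η ∈ Set.Icc (0 : ℝ) 1) :
    ψ E κ (1 / 2) ≤ (ψ E κ η + ψ E κ (1 - η)) / 2 := by
  obtain ⟨hη0, hη1⟩ := hη
  have hc : 0 ≤ (κ - 1) * (E + 1) := mul_nonneg (by linarith) (by linarith)
  have hmid := (convexOn_g_add_sub_g hc).2 (x := (1 - η) * E) (y := η * E)
    (mul_nonneg (by linarith) hE) (mul_nonneg hη0 hE) one_half_pos.le one_half_pos.le
    (add_halves 1)
  simp only [smul_eq_mul] at hmid
  rw [show 1 / 2 * ((1 - η) * E) + 1 / 2 * (η * E) = (1 - 1 / 2) * E by ring] at hmid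
  simp only [ψ_eq_g_add_sub_g, sub_sub_cancel]
  linarith
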